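/- Let α_t, β ∈ ℝ with 0 < α_t ≤ 1, 0 ≤ β < 1, and set α' = (1-β)·α_t. Then for all x, ε, z ∈ ℝ: √(α') · ((x - √(1-α_t)·ε)/√(α_t)) + √(1-α'-β) · ε + √β · z = √(1-β) · x + √β · z. -/
import Mathlib


/-- DDPM Inversion coincides with the original DDPM forward step:
`√(α') f + √(1-α'-β) ε + √β z = √(1-β) x + √β z`, where
`f = (x - √(1-α_t) ε)/√(α_t)` and `α' = (1-β) α_t`. -/
theorem ddpm_inversion_eq_forward
    (αt β : ℝ) (hαt : 0 < αt) (hαt1 : αt ≤ 1) (hβ : 0 ≤ β) (hβ1 : β < 1)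
    (α' : ℝ) (hα' : α' = (1 - β) * αt) (x ε z : ℝ) :
    Real.sqrt α' * ((x - Real.sqrt (1 - αt) * ε) / Real.sqrt αt) +
        Real.sqrt (1 - α' - β) * ε + Real.sqrt β * z =
      Real.sqrt (1 - β) * x + Real.sqrt β * z := by
  subst hα'
  have hb : (0:ℝ) ≤ 1 - β := by linarith
  have h1 : 1 - (1 - β) * αt - β = (1 - β) * (1 - αt) := by ring
  have h2 : Real.sqrt ((1 - β) * αt) = Real.sqrt (1 - β) * Real.sqrt αt :=
    Real.sqrt_mul hb _
  have h3 : Real.sqrt (1 - (1 - β) * αt - β) = Real.sqrt (1 - β) * Real.sqrt (1 - αt) := by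
    rw [h1, Real.sqrt_mul hb]
  have hs : Real.sqrt αt ≠ 0 := ne_of_gt (Real.sqrt_pos.mpr hαt)
  rw [h2, h3]
  field_simp
  ring
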